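/- Let x ∈ C([0,1],ℝ) and let K ≥ 0 be such that |f(s,x(s))| ≤ K for all s ∈ [0,1]. Then for all t₁, t₂ with 0 ≤ t₁ ≤ t₂ ≤ 1 one has |(𝒜x)(t₂) − (𝒜x)(t₁)| ≤ Ω·K·(t₂ − t₁). -/

import Mathlib

open MeasureTheory intervalIntegral

noncomputable def Δ₁ (σ ν ξ : ℝ) (n : ℕ) (η α : ℕ → ℝ) : ℝ :=
  ξ ^ (1 - σ) * Real.Gamma (2 - ν) -
    Real.Gamma (2 - σ) * ∑ i ∈ Finset.Icc 1 n, α i * η i ^ (1 - ν)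

noncomputable def Δ₂ (n : ℕ) (η β γ : ℕ → ℝ) : ℝ :=
  1 - ∑ i ∈ Finset.Icc 1 n, (β i * η i + γ i)

noncomputable def Δ₃ (n : ℕ) (η β γ : ℕ → ℝ) : ℝ :=
  -2 + ∑ i ∈ Finset.Icc 1 n, η i * (β i * η i + 2 * γ i)

/-- The operator 𝒜 of the paper, acting on (the continuous extension of) a
continuous function on `[0,1]`. -/
noncomputable def opA (q σ ν ξ : ℝ) (n : ℕ) (η α β γ : ℕ → ℝ)
    (f : ℝ → ℝ → ℝ) (x : ℝ → ℝ) (t : ℝ) : ℝ :=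
  (∫ s in (0:ℝ)..t, (t - s) ^ (q - 1) / Real.Gamma q * f s (x s)) +
  (1 / Δ₂ n η β γ) *
    (-(∫ s in (0:ℝ)..1, (1 - s) ^ (q - 1) / Real.Gamma q * f s (x s)) +
     (∑ i ∈ Finset.Icc 1 n, β i *
        ∫ s in (0:ℝ)..η i, (η i - s) ^ q / Real.Gamma (q + 1) * f s (x s)) +
     ∑ i ∈ Finset.Icc 1 n, γ i *
        ∫ s in (0:ℝ)..η i, (η i - s) ^ (q - 1) / Real.Gamma q * f s (x s)) +
  Real.Gamma (2 - σ) * Real.Gamma (2 - ν) * (Δ₃ n η β γ + 2 * Δ₂ n η β γ * t) /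
      (2 * Δ₁ σ ν ξ n η α * Δ₂ n η β γ) *
    (-(∫ s in (0:ℝ)..ξ, (ξ - s) ^ (q - σ - 1) / Real.Gamma (q - σ) * f s (x s)) +
     ∑ i ∈ Finset.Icc 1 n, α i *
        ∫ s in (0:ℝ)..η i, (η i - s) ^ (q - ν - 1) / Real.Gamma (q - ν) * f s (x s))

noncomputable def Θ (q σ ν ξ : ℝ) (n : ℕ) (η α β γ : ℕ → ℝ) : ℝ :=
  1 / Real.Gamma (q + 1) +
  1 / (|Δ₂ n η β γ| * Real.Gamma (q + 2)) *
    (1 + q + ∑ i ∈ Finset.Icc 1 n, η i ^ q * (η i * |β i| + (q + 1) * |γ i|)) +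
  Real.Gamma (2 - σ) * Real.Gamma (2 - ν) * (|Δ₃ n η β γ| + 2 * |Δ₂ n η β γ|) /
      (2 * |Δ₁ σ ν ξ n η α * Δ₂ n η β γ|) *
    (ξ ^ (q - σ) / Real.Gamma (q - σ + 1) +
     ∑ i ∈ Finset.Icc 1 n, |α i| * η i ^ (q - ν) / Real.Gamma (q - ν + 1))


noncomputable def Ω (q σ ν ξ : ℝ) (n : ℕ) (η α : ℕ → ℝ) : ℝ :=
  1 / Real.Gamma q +
  Real.Gamma (2 - σ) * Real.Gamma (2 - ν) / |Δ₁ σ ν ξ n η α| *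
    (ξ ^ (q - σ) / Real.Gamma (q - σ + 1) +
     ∑ i ∈ Finset.Icc 1 n, |α i| * η i ^ (q - ν) / Real.Gamma (q - ν + 1))

/-!
In differences `(𝒜x)(t₂) − (𝒜x)(t₁)` the `t`-independent terms and the `Δ₃` part cancel, and
`Δ₂` cancels from the slope of the term linear in `t`, so only the Riemann–Liouville integral
`I^q g` of `g(s) = f(s, x(s))` and `Γ(2−σ)Γ(2−ν)(t₂ − t₁)/Δ₁` times the boundary functional
`−I^{q−σ} g(ξ) + ∑ αᵢ I^{q−ν} g(ηᵢ)` remain. The latter is at most `K` times the bracket in `Ω`,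
since `|I^p g(a)| ≤ K a^p / Γ(p+1)`. For `q ≥ 1` the kernel `(t − s)^(q−1)` increases with `t`, so
`|I^q g(t₂) − I^q g(t₁)| ≤ K (t₂^q − t₁^q) / Γ(q+1)`, and `t ↦ t^q` is `q`-Lipschitz on `[0,1]`.
-/

open Set Real

noncomputable def riemannLiouville (p : ℝ) (g : ℝ → ℝ) (t : ℝ) : ℝ :=
  ∫ s in (0:ℝ)..t, (t - s) ^ (p - 1) / Gamma p * g s

theorem monotoneOn_Icc_of_le_add_one {β : Type*} [Preorder β] {f : ℕ → β} {m n : ℕ}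
    (hf : ∀ i, m ≤ i → i < n → f i ≤ f (i + 1)) : MonotoneOn f (Icc m n) :=
  monotoneOn_of_le_succ ordConnected_Icc fun i _ hi hsi => by
    rw [Order.succ_eq_add_one] at hsi ⊢
    exact hf i hi.1 (Nat.lt_of_succ_le hsi.2)

theorem rpow_sub_rpow_le_mul_sub {p a b : ℝ} (hp : 1 ≤ p) (ha : 0 ≤ a) (hab : a ≤ b)
    (hb : b ≤ 1) : b ^ p - a ^ p ≤ p * (b - a) := by
  have hp0 : 0 < p := by linarith
  have hint : ∫ s in a..b, s ^ (p - 1) = (b ^ p - a ^ p) / p := by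
    rw [integral_rpow (Or.inl (by linarith)), sub_add_cancel]
  have hle : ∫ s in a..b, s ^ (p - 1) ≤ ∫ _ in a..b, (1 : ℝ) :=
    intervalIntegral.integral_mono_on hab (intervalIntegrable_rpow' (by linarith))
      intervalIntegrable_const fun s hs =>
        rpow_le_one (ha.trans hs.1) (hs.2.trans hb) (by linarith)
  rw [hint, intervalIntegral.integral_const, smul_eq_mul, mul_one, div_le_iff₀ hp0] at hle
  linarith

theorem abs_integral_mul_le_mul_integral {k g : ℝ → ℝ} {a b K : ℝ} (hab : a ≤ b)
    (hk : IntervalIntegrable k volume a b) (hk0 : ∀ s ∈ Ioc a b, 0 ≤ k s)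
    (hg : ∀ s ∈ Ioc a b, |g s| ≤ K) :
    |∫ s in a..b, k s * g s| ≤ K * ∫ s in a..b, k s := by
  rw [← intervalIntegral.integral_const_mul, ← norm_eq_abs]
  refine norm_integral_le_of_norm_le hab (ae_of_all _ fun s hs => ?_) (hk.const_mul K)
  rw [norm_eq_abs, abs_mul, abs_of_nonneg (hk0 s hs), mul_comm]
  exact mul_le_mul_of_nonneg_right (hg s hs) (hk0 s hs)

section RiemannLiouville

variable {p K t₁ t₂ : ℝ} {g : ℝ → ℝ}

theorem intervalIntegrable_sub_rpow_div_Gamma (hp : 0 < p) (t a b : ℝ) :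
    IntervalIntegrable (fun s => (t - s) ^ (p - 1) / Gamma p) volume a b := by
  have h := (intervalIntegrable_rpow' (a := t - a) (b := t - b) (r := p - 1)
    (by linarith)).comp_sub_left t
  simpa using h.div_const (Gamma p)

theorem integral_sub_rpow_div_Gamma (hp : 0 < p) (t : ℝ) :
    ∫ s in (0:ℝ)..t, (t - s) ^ (p - 1) / Gamma p = t ^ p / Gamma (p + 1) := by
  rw [intervalIntegral.integral_div, integral_comp_sub_left (fun s => s ^ (p - 1)) t,
    integral_rpow (Or.inl (by linarith)), sub_add_cancel, sub_self, sub_zero,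
    zero_rpow hp.ne', sub_zero, Gamma_add_one hp.ne', div_div]

theorem abs_riemannLiouville_le (hp : 0 < p) (ht : 0 ≤ t₁)
    (hgK : ∀ s ∈ Icc 0 t₁, |g s| ≤ K) :
    |riemannLiouville p g t₁| ≤ K * t₁ ^ p / Gamma (p + 1) := by
  have h := abs_integral_mul_le_mul_integral ht (intervalIntegrable_sub_rpow_div_Gamma hp t₁ 0 t₁)
    (fun s hs => div_nonneg (rpow_nonneg (by linarith [hs.2]) _) (Gamma_pos_of_pos hp).le)
    (fun s hs => hgK s (Ioc_subset_Icc_self hs))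
  rwa [integral_sub_rpow_div_Gamma hp, ← mul_div_assoc] at h

theorem riemannLiouville_sub_eq (hp : 0 < p) (ht₁ : 0 ≤ t₁) (h12 : t₁ ≤ t₂)
    (hg : ContinuousOn g (Icc 0 t₂)) :
    riemannLiouville p g t₂ - riemannLiouville p g t₁ =
      (∫ s in (0:ℝ)..t₁, ((t₂ - s) ^ (p - 1) / Gamma p - (t₁ - s) ^ (p - 1) / Gamma p) * g s) +
        ∫ s in t₁..t₂, (t₂ - s) ^ (p - 1) / Gamma p * g s := by
  have hkg : ∀ t a b, 0 ≤ a → a ≤ b → b ≤ t₂ →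
      IntervalIntegrable (fun s => (t - s) ^ (p - 1) / Gamma p * g s) volume a b :=
    fun t a b ha hab hb => (intervalIntegrable_sub_rpow_div_Gamma hp t a b).mul_continuousOn
      (hg.mono (by rw [uIcc_of_le hab]; exact Icc_subset_Icc ha hb))
  simp only [riemannLiouville, sub_mul]
  rw [intervalIntegral.integral_sub (hkg t₂ 0 t₁ le_rfl ht₁ h12) (hkg t₁ 0 t₁ le_rfl ht₁ h12),
    ← intervalIntegral.integral_add_adjacent_intervals (hkg t₂ 0 t₁ le_rfl ht₁ h12)
      (hkg t₂ t₁ t₂ ht₁ h12 le_rfl)]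
  ring

theorem abs_riemannLiouville_sub_le (hp : 1 ≤ p) (ht₁ : 0 ≤ t₁) (h12 : t₁ ≤ t₂)
    (hg : ContinuousOn g (Icc 0 t₂)) (hgK : ∀ s ∈ Icc 0 t₂, |g s| ≤ K) :
    |riemannLiouville p g t₂ - riemannLiouville p g t₁| ≤
      K * (t₂ ^ p - t₁ ^ p) / Gamma (p + 1) := by
  have hp0 : 0 < p := by linarith
  have hk := intervalIntegrable_sub_rpow_div_Gamma hp0
  have hΓ := (Gamma_pos_of_pos hp0).le
  have hkernel_mono :
      ∀ s ∈ Ioc 0 t₁, 0 ≤ (t₂ - s) ^ (p - 1) / Gamma p - (t₁ - s) ^ (p - 1) / Gamma p :=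
    fun s hs => sub_nonneg.2 <| div_le_div_of_nonneg_right
      (rpow_le_rpow (by linarith [hs.2]) (by linarith) (by linarith)) hΓ
  rw [riemannLiouville_sub_eq hp0 ht₁ h12 hg]
  calc _ ≤ K * (∫ s in (0:ℝ)..t₁, ((t₂ - s) ^ (p - 1) / Gamma p - (t₁ - s) ^ (p - 1) / Gamma p)) +
        K * ∫ s in t₁..t₂, (t₂ - s) ^ (p - 1) / Gamma p :=
        (abs_add_le _ _).trans <| add_le_add
          (abs_integral_mul_le_mul_integral ht₁ ((hk t₂ 0 t₁).sub (hk t₁ 0 t₁)) hkernel_mono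
            fun s hs => hgK s ⟨hs.1.le, hs.2.trans h12⟩)
          (abs_integral_mul_le_mul_integral h12 (hk t₂ t₁ t₂)
            (fun s hs => div_nonneg (rpow_nonneg (by linarith [hs.2]) _) hΓ)
            fun s hs => hgK s ⟨ht₁.trans hs.1.le, hs.2⟩)
    _ = K * ((∫ s in (0:ℝ)..t₂, (t₂ - s) ^ (p - 1) / Gamma p) -
          ∫ s in (0:ℝ)..t₁, (t₁ - s) ^ (p - 1) / Gamma p) := by
        rw [intervalIntegral.integral_sub (hk t₂ 0 t₁) (hk t₁ 0 t₁),
          ← intervalIntegral.integral_add_adjacent_intervals (hk t₂ 0 t₁) (hk t₂ t₁ t₂)]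
        ring
    _ = K * (t₂ ^ p - t₁ ^ p) / Gamma (p + 1) := by
        rw [integral_sub_rpow_div_Gamma hp0, integral_sub_rpow_div_Gamma hp0]
        ring

theorem abs_riemannLiouville_sub_le_mul_sub (hp : 1 ≤ p) (ht₁ : 0 ≤ t₁) (h12 : t₁ ≤ t₂)
    (ht₂ : t₂ ≤ 1) (hg : ContinuousOn g (Icc 0 t₂)) (hgK : ∀ s ∈ Icc 0 t₂, |g s| ≤ K) :
    |riemannLiouville p g t₂ - riemannLiouville p g t₁| ≤ K * (t₂ - t₁) / Gamma p := by
  have hp0 : 0 < p := by linarith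
  have hK : 0 ≤ K := (abs_nonneg _).trans (hgK 0 ⟨le_rfl, ht₁.trans h12⟩)
  calc _ ≤ K * (t₂ ^ p - t₁ ^ p) / Gamma (p + 1) := abs_riemannLiouville_sub_le hp ht₁ h12 hg hgK
    _ ≤ K * (p * (t₂ - t₁)) / Gamma (p + 1) := by
        gcongr
        exact rpow_sub_rpow_le_mul_sub hp ht₁ h12 ht₂
    _ = K * (t₂ - t₁) / Gamma p := by
        rw [Gamma_add_one hp0.ne']
        field_simp

end RiemannLiouville

theorem abs_neg_riemannLiouville_add_sum_le {p₁ p₂ ξ K : ℝ} {g : ℝ → ℝ} {s : Finset ℕ}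
    {η α : ℕ → ℝ} (hp₁ : 0 < p₁) (hp₂ : 0 < p₂) (hξ : ξ ∈ Icc 0 1)
    (hη : ∀ i ∈ s, η i ∈ Icc 0 1) (hgK : ∀ t ∈ Icc 0 1, |g t| ≤ K) :
    |-riemannLiouville p₁ g ξ + ∑ i ∈ s, α i * riemannLiouville p₂ g (η i)| ≤
      K * (ξ ^ p₁ / Gamma (p₁ + 1) + ∑ i ∈ s, |α i| * η i ^ p₂ / Gamma (p₂ + 1)) := by
  have hbound : ∀ {p a : ℝ}, 0 < p → a ∈ Icc 0 1 →
      |riemannLiouville p g a| ≤ K * a ^ p / Gamma (p + 1) := fun hp ha =>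
    abs_riemannLiouville_le hp ha.1 fun t ht => hgK t ⟨ht.1, ht.2.trans ha.2⟩
  calc _ ≤ |riemannLiouville p₁ g ξ| + ∑ i ∈ s, |α i| * |riemannLiouville p₂ g (η i)| := by
        refine (abs_add_le _ _).trans ?_
        rw [abs_neg]
        gcongr
        refine (Finset.abs_sum_le_sum_abs _ _).trans_eq ?_
        simp only [abs_mul]
    _ ≤ K * ξ ^ p₁ / Gamma (p₁ + 1) + ∑ i ∈ s, |α i| * (K * η i ^ p₂ / Gamma (p₂ + 1)) := by
        gcongr with i hi
        · exact hbound hp₁ hξ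
        · exact hbound hp₂ (hη i hi)
    _ = _ := by
        rw [mul_add, Finset.mul_sum, mul_div_assoc]
        congr 1
        exact Finset.sum_congr rfl fun i _ => by ring

theorem opA_sub_opA {q σ ν ξ : ℝ} {n : ℕ} {η α β γ : ℕ → ℝ} (hΔ₂ : Δ₂ n η β γ ≠ 0)
    (f : ℝ → ℝ → ℝ) (x : ℝ → ℝ) (t₁ t₂ : ℝ) :
    opA q σ ν ξ n η α β γ f x t₂ - opA q σ ν ξ n η α β γ f x t₁ =
      riemannLiouville q (fun s => f s (x s)) t₂ - riemannLiouville q (fun s => f s (x s)) t₁ +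
        Gamma (2 - σ) * Gamma (2 - ν) * (t₂ - t₁) / Δ₁ σ ν ξ n η α *
          (-riemannLiouville (q - σ) (fun s => f s (x s)) ξ +
            ∑ i ∈ Finset.Icc 1 n, α i * riemannLiouville (q - ν) (fun s => f s (x s)) (η i)) := by
  unfold opA riemannLiouville
  field_simp
  ring

theorem thm33_equicontinuity_general (q σ ν ξ : ℝ) (n : ℕ) (η α β γ : ℕ → ℝ)
    (hq1 : 1 < q) (hσ1 : σ ≤ 1) (hν1 : ν ≤ 1)
    (hn : 1 ≤ n) (hξ : 0 < ξ) (hξη : ξ < η 1)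
    (hηmono : ∀ i, 1 ≤ i → i < n → η i < η (i + 1)) (hηn : η n < 1)
    (hΔ₂ : Δ₂ n η β γ ≠ 0)
    (f : ℝ → ℝ → ℝ)
    (hf : ContinuousOn (Function.uncurry f) (Set.Icc 0 1 ×ˢ Set.univ))
    (x : C(Set.Icc (0:ℝ) 1, ℝ)) (K : ℝ)
    (hK : ∀ s ∈ Set.Icc (0:ℝ) 1, |f s (Set.IccExtend zero_le_one (⇑x) s)| ≤ K) :
    ∀ t₁ t₂ : ℝ, 0 ≤ t₁ → t₁ ≤ t₂ → t₂ ≤ 1 →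
      |opA q σ ν ξ n η α β γ f (Set.IccExtend zero_le_one ⇑x) t₂ -
        opA q σ ν ξ n η α β γ f (Set.IccExtend zero_le_one ⇑x) t₁| ≤
      Ω q σ ν ξ n η α * K * (t₂ - t₁) := by
  intro t₁ t₂ ht₁ h12 ht₂
  set g : ℝ → ℝ := fun s => f s (Set.IccExtend zero_le_one ⇑x s)
  have hg : ContinuousOn g (Icc 0 1) :=
    hf.comp (continuous_id.prodMk x.continuous.Icc_extend').continuousOn fun s hs => ⟨hs, trivial⟩
  have hη : ∀ i ∈ Finset.Icc 1 n, η i ∈ Icc (0:ℝ) 1 := fun i hi => by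
    have hmono := monotoneOn_Icc_of_le_add_one fun i hi hin => (hηmono i hi hin).le
    obtain ⟨hi1, hin⟩ := Finset.mem_Icc.1 hi
    exact ⟨by linarith [hmono ⟨le_rfl, hn⟩ ⟨hi1, hin⟩ hi1],
      by linarith [hmono ⟨hi1, hin⟩ ⟨hn, le_rfl⟩ hin]⟩
  have hξ1 : ξ ∈ Icc (0:ℝ) 1 := ⟨hξ.le, by linarith [(hη 1 (Finset.mem_Icc.2 ⟨le_rfl, hn⟩)).2]⟩
  have hC : 0 ≤ Gamma (2 - σ) * Gamma (2 - ν) * (t₂ - t₁) :=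
    mul_nonneg (mul_nonneg (Gamma_pos_of_pos (by linarith)).le
      (Gamma_pos_of_pos (by linarith)).le) (by linarith)
  rw [opA_sub_opA hΔ₂]
  calc _ ≤ K * (t₂ - t₁) / Gamma q + Gamma (2 - σ) * Gamma (2 - ν) * (t₂ - t₁) /
        |Δ₁ σ ν ξ n η α| * (K * (ξ ^ (q - σ) / Gamma (q - σ + 1) +
          ∑ i ∈ Finset.Icc 1 n, |α i| * η i ^ (q - ν) / Gamma (q - ν + 1))) := by
        refine (abs_add_le _ _).trans (add_le_add ?_ ?_)
        · exact abs_riemannLiouville_sub_le_mul_sub hq1.le ht₁ h12 ht₂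
            (hg.mono (Icc_subset_Icc le_rfl ht₂)) fun s hs => hK s ⟨hs.1, hs.2.trans ht₂⟩
        · rw [abs_mul, abs_div, abs_of_nonneg hC]
          gcongr
          exact abs_neg_riemannLiouville_add_sum_le (by linarith) (by linarith) hξ1 hη hK
    _ = Ω q σ ν ξ n η α * K * (t₂ - t₁) := by
        unfold Ω
        ring

theorem thm33_equicontinuity (q σ ν ξ : ℝ) (n : ℕ) (η α β γ : ℕ → ℝ)
    (hq1 : 1 < q) (hq2 : q ≤ 2) (hσ0 : 0 < σ) (hσ1 : σ ≤ 1) (hν0 : 0 < ν) (hν1 : ν ≤ 1)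
    (hn : 1 ≤ n) (hξ : 0 < ξ) (hξη : ξ < η 1)
    (hηmono : ∀ i, 1 ≤ i → i < n → η i < η (i + 1)) (hηn : η n < 1)
    (hΔ₁ : Δ₁ σ ν ξ n η α ≠ 0) (hΔ₂ : Δ₂ n η β γ ≠ 0)
    (f : ℝ → ℝ → ℝ)
    (hf : ContinuousOn (Function.uncurry f) (Set.Icc 0 1 ×ˢ Set.univ))
    (x : C(Set.Icc (0:ℝ) 1, ℝ)) (K : ℝ) (hK0 : 0 ≤ K)
    (hK : ∀ s ∈ Set.Icc (0:ℝ) 1, |f s (Set.IccExtend zero_le_one (⇑x) s)| ≤ K) :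
    ∀ t₁ t₂ : ℝ, 0 ≤ t₁ → t₁ ≤ t₂ → t₂ ≤ 1 →
      |opA q σ ν ξ n η α β γ f (Set.IccExtend zero_le_one ⇑x) t₂ -
        opA q σ ν ξ n η α β γ f (Set.IccExtend zero_le_one ⇑x) t₁| ≤
      Ω q σ ν ξ n η α * K * (t₂ - t₁) :=
  thm33_equicontinuity_general q σ ν ξ n η α β γ hq1 hσ1 hν1 hn hξ hξη hηmono hηn hΔ₂ f hf x K hK
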